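/- arXiv:2106.14648 — 5 statements merged into one kernel-verified Lean document; each statement's English description precedes it below -/
import Mathlib

section
/- Let E be a real inner product space, σ > 0, ι a finite nonempty index set, data points x_i ∈ E and values a_i ∈ ℝ for i ∈ ι. Define w_i(x) = exp(−‖x − x_i‖²/σ²) and the smoothed estimator f(x) = (∑_i w_i(x) a_i)/(∑_i w_i(x)), whose denominator is strictly positive for every x. Then f is differentiable at every x ∈ E and its derivative satisfies the operator-norm bound ‖Df(x)‖ ≤ (2/σ²) · (max_{i∈ι} ‖x − x_i‖) · (max_{i∈ι} a_i − min_{i∈ι} a_i). -/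
/-!
With positive weights `wᵢ` and `W = ∑ wᵢ`, the estimator is the weighted mean `f = ∑ wᵢ aᵢ / W`.
If each `wᵢ` has logarithmic derivative `Lᵢ`, the quotient rule gives
`Df = ∑ (wᵢ / W) (aᵢ - f) Lᵢ`, a convex combination. For Gaussian weights
`Lᵢ = -(2/σ²) ⟪x - xᵢ, ·⟫`, of norm at most `(2/σ²) maxᵢ ‖x - xᵢ‖`, and `|aᵢ - f| ≤ max a - min a`
since `f` itself is a convex combination of the `aᵢ`.
-/

open Finset

theorem hasFDerivAt_sum_mul_div_sum {E : Type*} [NormedAddCommGroup E] [NormedSpace ℝ E]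
    {ι : Type*} [Fintype ι] {w : ι → E → ℝ} {L : ι → E →L[ℝ] ℝ} (a : ι → ℝ) {x : E}
    (hw : ∀ i, HasFDerivAt (w i) (w i x • L i) x) (hW : ∑ i, w i x ≠ 0) :
    HasFDerivAt (fun y => (∑ i, w i y * a i) / ∑ i, w i y)
      (∑ i, (w i x / ∑ j, w j x) • ((a i - (∑ j, w j x * a j) / ∑ j, w j x) • L i)) x := by
  have hN := HasFDerivAt.fun_sum fun i (_ : i ∈ univ) => (hw i).mul_const (a i)
  have hD := HasFDerivAt.fun_sum fun i (_ : i ∈ univ) => hw i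
  have hD_inv := (hasDerivAt_inv hW).comp_hasFDerivAt x hD
  simp only [div_eq_mul_inv]
  refine (hN.mul hD_inv).congr_fderiv ?_
  simp only [Function.comp_apply, smul_sum, smul_smul, ← sum_add_distrib, ← add_smul]
  refine sum_congr rfl fun i _ => congrArg (· • L i) ?_
  field_simp
  ring

theorem hasFDerivAt_exp_neg_norm_sub_sq_div {E : Type*} [NormedAddCommGroup E]
    [InnerProductSpace ℝ E] (z : E) (s : ℝ) (x : E) :
    HasFDerivAt (fun y => Real.exp (-‖y - z‖ ^ 2 / s))
      (Real.exp (-‖x - z‖ ^ 2 / s) • (-2 / s) • innerSL ℝ (x - z)) x := by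
  have hsq : HasFDerivAt (fun y => ‖y - z‖ ^ 2) ((2 : ℝ) • innerSL ℝ (x - z)) x := by
    simpa [two_smul] using ((hasFDerivAt_id x).sub_const z).norm_sq
  convert (hsq.const_mul (-1 / s)).exp using 1
  · ext y
    ring_nf
  · rw [smul_smul, smul_smul, smul_smul]
    ring_nf

theorem norm_sum_smul_le_of_norm_le {ι V : Type*} [SeminormedAddCommGroup V] [NormedSpace ℝ V]
    {s : Finset ι} {p : ι → ℝ} {v : ι → V} {C : ℝ} (hp : ∀ i ∈ s, 0 ≤ p i)
    (hp1 : ∑ i ∈ s, p i = 1) (hv : ∀ i ∈ s, ‖v i‖ ≤ C) : ‖∑ i ∈ s, p i • v i‖ ≤ C := by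
  simpa using (convex_closedBall (0 : V) C).sum_mem hp hp1 (by simpa using hv)

theorem abs_sub_sum_mul_div_sum_le {ι : Type*} [Fintype ι] [Nonempty ι] {w : ι → ℝ}
    (hw : ∀ i, 0 ≤ w i) (hW : 0 < ∑ i, w i) (a : ι → ℝ) (i : ι) :
    |a i - (∑ j, w j * a j) / ∑ j, w j| ≤
      univ.sup' univ_nonempty a - univ.inf' univ_nonempty a := by
  have hmean : (∑ j, w j * a j) / ∑ j, w j = univ.centerMass w a := by
    simp only [centerMass, smul_eq_mul, div_eq_inv_mul]
  have hle := centerMass_le_sup (fun j _ => hw j) hW (f := a)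
  have hge := inf_le_centerMass (fun j _ => hw j) hW (f := a)
  rw [hmean, abs_sub_le_iff]
  constructor <;> linarith [le_sup' a (mem_univ i), inf'_le a (mem_univ i)]

theorem smoothed_estimator_differentiable_and_deriv_bound_general
    {E : Type*} [NormedAddCommGroup E] [InnerProductSpace ℝ E]
    {ι : Type*} [Fintype ι] [Nonempty ι]
    (σ : ℝ) (xi : ι → E) (a : ι → ℝ) (x : E) :
    (∀ y : E, 0 < ∑ i, Real.exp (-‖y - xi i‖ ^ 2 / σ ^ 2)) ∧
    DifferentiableAt ℝ
      (fun y : E => (∑ i, Real.exp (-‖y - xi i‖ ^ 2 / σ ^ 2) * a i) /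
        (∑ i, Real.exp (-‖y - xi i‖ ^ 2 / σ ^ 2))) x ∧
    ‖fderiv ℝ
        (fun y : E => (∑ i, Real.exp (-‖y - xi i‖ ^ 2 / σ ^ 2) * a i) /
          (∑ i, Real.exp (-‖y - xi i‖ ^ 2 / σ ^ 2))) x‖
      ≤ 2 / σ ^ 2 * (Finset.univ.sup' Finset.univ_nonempty fun i => ‖x - xi i‖) *
        ((Finset.univ.sup' Finset.univ_nonempty a) -
          (Finset.univ.inf' Finset.univ_nonempty a)) := by
  have hW : ∀ y : E, 0 < ∑ i, Real.exp (-‖y - xi i‖ ^ 2 / σ ^ 2) := fun y =>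
    sum_pos (fun i _ => Real.exp_pos _) univ_nonempty
  have hf := hasFDerivAt_sum_mul_div_sum a
    (fun i => hasFDerivAt_exp_neg_norm_sub_sq_div (xi i) (σ ^ 2) x) (hW x).ne'
  refine ⟨hW, hf.differentiableAt, ?_⟩
  rw [hf.fderiv]
  refine norm_sum_smul_le_of_norm_le (fun i _ => by positivity)
    (by rw [← sum_div, div_self (hW x).ne']) fun i _ => ?_
  have hL : ‖(-2 / σ ^ 2) • innerSL ℝ (x - xi i)‖ ≤
      2 / σ ^ 2 * univ.sup' univ_nonempty fun j => ‖x - xi j‖ := by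
    rw [norm_smul, innerSL_apply_norm, Real.norm_eq_abs, neg_div, abs_neg,
      abs_of_nonneg (by positivity)]
    gcongr
    exact le_sup' (fun j => ‖x - xi j‖) (mem_univ i)
  rw [norm_smul, Real.norm_eq_abs, mul_comm]
  exact mul_le_mul hL (abs_sub_sum_mul_div_sum_le (fun j => (Real.exp_pos _).le) (hW x) a i)
    (abs_nonneg _) ((norm_nonneg _).trans hL)

/-- The Gaussian-kernel smoothed (Nadaraya–Watson) estimator
`f x = (∑ i, exp (−‖x − xi i‖²/σ²) * a i) / (∑ i, exp (−‖x − xi i‖²/σ²))`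
has a strictly positive denominator everywhere, is differentiable everywhere, and its
derivative satisfies the operator-norm bound
`‖Df x‖ ≤ (2/σ²) · max_i ‖x − xi i‖ · (max_i a i − min_i a i)`. -/
theorem smoothed_estimator_differentiable_and_deriv_bound
    {E : Type*} [NormedAddCommGroup E] [InnerProductSpace ℝ E]
    {ι : Type*} [Fintype ι] [Nonempty ι]
    (σ : ℝ) (hσ : 0 < σ) (xi : ι → E) (a : ι → ℝ) (x : E) :
    (∀ y : E, 0 < ∑ i, Real.exp (-‖y - xi i‖ ^ 2 / σ ^ 2)) ∧
    DifferentiableAt ℝ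
      (fun y : E => (∑ i, Real.exp (-‖y - xi i‖ ^ 2 / σ ^ 2) * a i) /
        (∑ i, Real.exp (-‖y - xi i‖ ^ 2 / σ ^ 2))) x ∧
    ‖fderiv ℝ
        (fun y : E => (∑ i, Real.exp (-‖y - xi i‖ ^ 2 / σ ^ 2) * a i) /
          (∑ i, Real.exp (-‖y - xi i‖ ^ 2 / σ ^ 2))) x‖
      ≤ 2 / σ ^ 2 * (Finset.univ.sup' Finset.univ_nonempty fun i => ‖x - xi i‖) *
        ((Finset.univ.sup' Finset.univ_nonempty a) -
          (Finset.univ.inf' Finset.univ_nonempty a)) :=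
  smoothed_estimator_differentiable_and_deriv_bound_general σ xi a x
end

section
/- (Theorem: Lipschitz continuity of Smoothed SHAP.) Let E be a real inner product space, σ > 0, ι a finite nonempty index set, data points x_i ∈ E and values a_i ∈ ℝ for i ∈ ι. Define w_i(x) = exp(−‖x − x_i‖²/σ²) and f(x) = (∑_i w_i(x) a_i)/(∑_i w_i(x)). Then for every centre c ∈ E and radius R > 0, f is Lipschitz on the closed ball of radius R around c with Lipschitz constant L = (2/σ²) · (R + max_{i∈ι} ‖c − x_i‖) · (max_{i∈ι} a_i − min_{i∈ι} a_i). In particular, for every x₀ ∈ E and δ > 0 there exists a finite constant L such that |f(x) − f(x₀)| ≤ L‖x − x₀‖ for all x with ‖x − x₀‖ < δ. -/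
/-!
The estimator is the softmax average `f = ∑ pᵢ aᵢ`, `pᵢ ∝ exp φᵢ`, of the values with potentials
`φᵢ x = -‖x - xᵢ‖² / σ²`. Its derivative is `∑ pᵢ (aᵢ - f) Dφᵢ`; as `f` is a convex combination
of the `aᵢ`, `|aᵢ - f| ≤ max a - min a`, while `‖Dφᵢ x‖ = 2‖x - xᵢ‖ / σ² ≤ 2 (R + maxᵢ ‖c - xᵢ‖) / σ²`
on the ball. The mean value inequality on the convex ball gives the Lipschitz bound, and the local
estimate is its case `c = x₀`, `R = δ`.
-/

open Finset Metric Real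

noncomputable def softmaxAverage {ι E : Type*} [Fintype ι] (φ : ι → E → ℝ) (a : ι → ℝ) (x : E) :
    ℝ :=
  (∑ i, exp (φ i x) * a i) / ∑ i, exp (φ i x)

namespace softmaxAverage

variable {ι E : Type*} [Fintype ι] (φ : ι → E → ℝ) (a : ι → ℝ)

theorem eq_centerMass (x : E) :
    softmaxAverage φ a x = univ.centerMass (fun i => exp (φ i x)) a := by
  simp only [softmaxAverage, centerMass, smul_eq_mul, div_eq_inv_mul]

variable [Nonempty ι]

theorem abs_sub_le_sup'_sub_inf' (x : E) (i : ι) :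
    |a i - softmaxAverage φ a x| ≤ univ.sup' univ_nonempty a - univ.inf' univ_nonempty a := by
  have hW : 0 < ∑ i, exp (φ i x) := sum_pos (fun i _ => exp_pos _) univ_nonempty
  have hle := centerMass_le_sup (s := univ) (f := a) (fun i _ => (exp_pos (φ i x)).le) hW
  have hge := inf_le_centerMass (s := univ) (f := a) (fun i _ => (exp_pos (φ i x)).le) hW
  rw [← eq_centerMass] at hle hge
  rw [abs_sub_le_iff]
  constructor <;> linarith [le_sup' a (mem_univ i), inf'_le a (mem_univ i)]

variable [NormedAddCommGroup E] [NormedSpace ℝ E]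

theorem hasFDerivAt {φ' : ι → E →L[ℝ] ℝ} {x : E} (hφ : ∀ i, HasFDerivAt (φ i) (φ' i) x) :
    HasFDerivAt (softmaxAverage φ a)
      (∑ i, (exp (φ i x) / (∑ j, exp (φ j x)) * (a i - softmaxAverage φ a x)) • φ' i) x := by
  have hW : (∑ i, exp (φ i x)) ≠ 0 := (sum_pos (fun i _ => exp_pos _) univ_nonempty).ne'
  have hS := HasFDerivAt.fun_sum fun i (_ : i ∈ univ) => ((hφ i).exp).mul_const (a i)
  have hWinv := (hasDerivAt_inv hW).comp_hasFDerivAt x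
    (HasFDerivAt.fun_sum fun i (_ : i ∈ univ) => (hφ i).exp)
  refine (hS.fun_mul hWinv).congr_fderiv ?_ |>.congr_of_eventuallyEq ?_
  · ext v
    simp only [softmaxAverage, _root_.add_apply, _root_.smul_apply, _root_.sum_apply,
      Function.comp_apply, smul_eq_mul, Finset.mul_sum, ← Finset.sum_add_distrib]
    refine sum_congr rfl fun i _ => ?_
    field_simp
    ring
  · exact Filter.Eventually.of_forall fun y => div_eq_mul_inv _ _

theorem lipschitzOnWith {s : Set E} (hs : Convex ℝ s) {φ' : ι → E → E →L[ℝ] ℝ} {K : ℝ}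
    (hφ : ∀ x ∈ s, ∀ i, HasFDerivAt (φ i) (φ' i x) x) (hK : ∀ x ∈ s, ∀ i, ‖φ' i x‖ ≤ K) :
    LipschitzOnWith (K * (univ.sup' univ_nonempty a - univ.inf' univ_nonempty a)).toNNReal
      (softmaxAverage φ a) s := by
  refine hs.lipschitzOnWith_of_nnnorm_hasFDerivWithin_le
    (fun x hx => (hasFDerivAt φ a (hφ x hx)).hasFDerivWithinAt) fun x hx => ?_
  rw [← norm_toNNReal]
  refine Real.toNNReal_mono ?_
  set p := fun i => exp (φ i x) / ∑ j, exp (φ j x)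
  have hp : ∑ i, p i = 1 := by
    rw [← sum_div, div_self (sum_pos (fun i _ => exp_pos _) univ_nonempty).ne']
  calc ‖∑ i, (p i * (a i - softmaxAverage φ a x)) • φ' i x‖
      ≤ ∑ i, p i * ((univ.sup' univ_nonempty a - univ.inf' univ_nonempty a) * K) := by
        refine norm_sum_le_of_le _ fun i _ => ?_
        rw [norm_smul, norm_mul, Real.norm_of_nonneg (by positivity), mul_assoc]
        gcongr
        · exact (abs_nonneg _).trans (abs_sub_le_sup'_sub_inf' φ a x i)
        · exact abs_sub_le_sup'_sub_inf' φ a x i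
        · exact hK x hx i
    _ = K * (univ.sup' univ_nonempty a - univ.inf' univ_nonempty a) := by
        rw [← sum_mul, hp, one_mul, mul_comm]

end softmaxAverage

theorem hasFDerivAt_neg_norm_sub_sq_div {F : Type*} [NormedAddCommGroup F] [InnerProductSpace ℝ F]
    (p x : F) (s : ℝ) :
    HasFDerivAt (fun y => -‖y - p‖ ^ 2 / s) ((-2 / s) • innerSL ℝ (x - p)) x := by
  refine (((hasFDerivAt_id x).sub_const p).norm_sq.const_mul (-1 / s)).congr_fderiv ?_
    |>.congr_of_eventuallyEq ?_
  · ext v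
    simp only [id_eq, map_sub, ContinuousLinearMap.comp_id, _root_.smul_apply, _root_.sub_apply,
      coe_innerSL_apply, nsmul_eq_mul, Nat.cast_ofNat, smul_eq_mul]
    ring
  · exact Filter.Eventually.of_forall fun y => by simp only [id]; ring

theorem smoothed_shap_locally_lipschitz_general
    {E : Type*} [NormedAddCommGroup E] [InnerProductSpace ℝ E]
    {ι : Type*} [Fintype ι] [Nonempty ι]
    (σ : ℝ) (xi : ι → E) (a : ι → ℝ) :
    (∀ (c : E) (R : ℝ), 0 < R →
      LipschitzOnWith
        (Real.toNNReal (2 / σ ^ 2 *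
          (R + Finset.univ.sup' Finset.univ_nonempty fun i => ‖c - xi i‖) *
          ((Finset.univ.sup' Finset.univ_nonempty a) -
            (Finset.univ.inf' Finset.univ_nonempty a))))
        (fun x : E => (∑ i, Real.exp (-‖x - xi i‖ ^ 2 / σ ^ 2) * a i) /
          (∑ i, Real.exp (-‖x - xi i‖ ^ 2 / σ ^ 2)))
        (Metric.closedBall c R)) ∧
    (∀ (x₀ : E) (δ : ℝ), 0 < δ → ∃ L : ℝ, 0 ≤ L ∧
      ∀ x : E, ‖x - x₀‖ < δ →
        |(∑ i, Real.exp (-‖x - xi i‖ ^ 2 / σ ^ 2) * a i) /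
            (∑ i, Real.exp (-‖x - xi i‖ ^ 2 / σ ^ 2)) -
          (∑ i, Real.exp (-‖x₀ - xi i‖ ^ 2 / σ ^ 2) * a i) /
            (∑ i, Real.exp (-‖x₀ - xi i‖ ^ 2 / σ ^ 2))| ≤ L * ‖x - x₀‖) := by
  have hball (c : E) (R : ℝ) :
      LipschitzOnWith (2 / σ ^ 2 * (R + univ.sup' univ_nonempty fun i => ‖c - xi i‖) *
          (univ.sup' univ_nonempty a - univ.inf' univ_nonempty a)).toNNReal
        (softmaxAverage (fun i y => -‖y - xi i‖ ^ 2 / σ ^ 2) a) (closedBall c R) := by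
    refine softmaxAverage.lipschitzOnWith _ a (convex_closedBall c R)
      (fun x _ i => hasFDerivAt_neg_norm_sub_sq_div (xi i) x _) fun x hx i => ?_
    rw [norm_smul, innerSL_apply_norm, norm_div, norm_neg, Real.norm_two,
      Real.norm_of_nonneg (sq_nonneg σ)]
    gcongr
    calc ‖x - xi i‖ ≤ ‖x - c‖ + ‖c - xi i‖ := norm_sub_le_norm_sub_add_norm_sub _ _ _
      _ ≤ R + univ.sup' univ_nonempty fun i => ‖c - xi i‖ :=
        add_le_add (mem_closedBall_iff_norm.mp hx) (le_sup' (fun i => ‖c - xi i‖) (mem_univ i))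
  refine ⟨fun c R _ => hball c R, fun x₀ δ hδ => ?_⟩
  obtain ⟨K, hK⟩ : ∃ K, LipschitzOnWith K _ (closedBall x₀ δ) := ⟨_, hball x₀ δ⟩
  refine ⟨K, K.coe_nonneg, fun x hx => ?_⟩
  have h := hK.dist_le_mul x (mem_closedBall_iff_norm.mpr hx.le) x₀ (mem_closedBall_self hδ.le)
  rwa [Real.dist_eq, dist_eq_norm] at h

/-- **Lipschitz continuity of Smoothed SHAP.** The Gaussian-kernel smoothed estimator
`f x = (∑ i, exp (−‖x − xi i‖²/σ²) * a i) / (∑ i, exp (−‖x − xi i‖²/σ²))` is Lipschitz on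
every closed ball `closedBall c R` with constant
`L = (2/σ²) · (R + max_i ‖c − xi i‖) · (max_i a i − min_i a i)`; in particular, for every
`x₀` and `δ > 0` there is a constant `L ≥ 0` with `|f x − f x₀| ≤ L‖x − x₀‖` whenever
`‖x − x₀‖ < δ`. -/
theorem smoothed_shap_locally_lipschitz
    {E : Type*} [NormedAddCommGroup E] [InnerProductSpace ℝ E]
    {ι : Type*} [Fintype ι] [Nonempty ι]
    (σ : ℝ) (hσ : 0 < σ) (xi : ι → E) (a : ι → ℝ) :
    (∀ (c : E) (R : ℝ), 0 < R →
      LipschitzOnWith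
        (Real.toNNReal (2 / σ ^ 2 *
          (R + Finset.univ.sup' Finset.univ_nonempty fun i => ‖c - xi i‖) *
          ((Finset.univ.sup' Finset.univ_nonempty a) -
            (Finset.univ.inf' Finset.univ_nonempty a))))
        (fun x : E => (∑ i, Real.exp (-‖x - xi i‖ ^ 2 / σ ^ 2) * a i) /
          (∑ i, Real.exp (-‖x - xi i‖ ^ 2 / σ ^ 2)))
        (Metric.closedBall c R)) ∧
    (∀ (x₀ : E) (δ : ℝ), 0 < δ → ∃ L : ℝ, 0 ≤ L ∧
      ∀ x : E, ‖x - x₀‖ < δ →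
        |(∑ i, Real.exp (-‖x - xi i‖ ^ 2 / σ ^ 2) * a i) /
            (∑ i, Real.exp (-‖x - xi i‖ ^ 2 / σ ^ 2)) -
          (∑ i, Real.exp (-‖x₀ - xi i‖ ^ 2 / σ ^ 2) * a i) /
            (∑ i, Real.exp (-‖x₀ - xi i‖ ^ 2 / σ ^ 2))| ≤ L * ‖x - x₀‖) :=
  smoothed_shap_locally_lipschitz_general σ xi a
end

section
/- Let μ be a probability measure on a real inner product space E (equipped with its Borel σ-algebra), let x ∈ E, and let f : E → ℝ be μ-integrable. Then as σ → ∞, the kernel-weighted expectation (∫ exp(−‖z − x‖²/σ²) f(z) dμ(z)) / (∫ exp(−‖z − x‖²/σ²) dμ(z)) converges to ∫ f dμ. -/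
/-!
The Gaussian weights take values in `(0, 1]` and tend to `1` pointwise as `σ → ∞`, so by
dominated convergence (with dominating functions `|f|` and `1`) the numerator tends to
`∫ f ∂μ` and the denominator to `μ univ = 1`.
-/

open MeasureTheory Filter Topology

section WeightedAverage

variable {α ι : Type*} [MeasurableSpace α] {μ : Measure α} {l : Filter ι}
  [l.IsCountablyGenerated] {w : ι → α → ℝ}

theorem tendsto_integral_mul_of_tendsto_one {f : α → ℝ} (hf : Integrable f μ)
    (hw_meas : ∀ i, AEStronglyMeasurable (w i) μ) (hw_le : ∀ i z, |w i z| ≤ 1)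
    (hw_lim : ∀ z, Tendsto (fun i => w i z) l (𝓝 1)) :
    Tendsto (fun i => ∫ z, w i z * f z ∂μ) l (𝓝 (∫ z, f z ∂μ)) := by
  refine tendsto_integral_filter_of_dominated_convergence (fun z => |f z|)
    (.of_forall fun i => (hw_meas i).mul hf.aestronglyMeasurable)
    (.of_forall fun i => .of_forall fun z => ?_) hf.abs (.of_forall fun z => ?_)
  · rw [Real.norm_eq_abs, abs_mul]
    exact mul_le_of_le_one_left (abs_nonneg _) (hw_le i z)
  · simpa using (hw_lim z).mul_const (f z)

theorem tendsto_integral_of_tendsto_one [IsFiniteMeasure μ]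
    (hw_meas : ∀ i, AEStronglyMeasurable (w i) μ) (hw_le : ∀ i z, |w i z| ≤ 1)
    (hw_lim : ∀ z, Tendsto (fun i => w i z) l (𝓝 1)) :
    Tendsto (fun i => ∫ z, w i z ∂μ) l (𝓝 (μ.real Set.univ)) := by
  simpa using tendsto_integral_mul_of_tendsto_one (integrable_const (1 : ℝ)) hw_meas hw_le hw_lim

theorem tendsto_weighted_average_of_tendsto_one [IsFiniteMeasure μ] [NeZero μ] {f : α → ℝ}
    (hf : Integrable f μ) (hw_meas : ∀ i, AEStronglyMeasurable (w i) μ)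
    (hw_le : ∀ i z, |w i z| ≤ 1) (hw_lim : ∀ z, Tendsto (fun i => w i z) l (𝓝 1)) :
    Tendsto (fun i => (∫ z, w i z * f z ∂μ) / ∫ z, w i z ∂μ) l (𝓝 (⨍ z, f z ∂μ)) := by
  rw [average_eq, smul_eq_mul, inv_mul_eq_div]
  exact (tendsto_integral_mul_of_tendsto_one hf hw_meas hw_le hw_lim).div
    (tendsto_integral_of_tendsto_one hw_meas hw_le hw_lim) measureReal_univ_ne_zero

end WeightedAverage

section GaussianKernel

variable {E : Type*} [SeminormedAddCommGroup E]

noncomputable def gaussianKernel (x : E) (σ : ℝ) (z : E) : ℝ :=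
  Real.exp (-‖z - x‖ ^ 2 / σ ^ 2)

theorem continuous_gaussianKernel (x : E) (σ : ℝ) : Continuous (gaussianKernel x σ) := by
  unfold gaussianKernel
  fun_prop

theorem abs_gaussianKernel_le_one (x : E) (σ : ℝ) (z : E) : |gaussianKernel x σ z| ≤ 1 := by
  rw [gaussianKernel, Real.abs_exp, Real.exp_le_one_iff]
  exact div_nonpos_of_nonpos_of_nonneg (neg_nonpos.2 (by positivity)) (by positivity)

theorem tendsto_gaussianKernel_atTop (x z : E) :
    Tendsto (fun σ => gaussianKernel x σ z) atTop (𝓝 1) := by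
  have h : Tendsto (fun σ : ℝ => -‖z - x‖ ^ 2 / σ ^ 2) atTop (𝓝 0) :=
    tendsto_const_nhds.div_atTop (tendsto_pow_atTop two_ne_zero)
  simpa [gaussianKernel, Function.comp_def] using (Real.continuous_exp.tendsto 0).comp h

end GaussianKernel

theorem kernel_weighted_expectation_tendsto_global_general
    {E : Type*} [NormedAddCommGroup E]
    [MeasurableSpace E] [BorelSpace E]
    (μ : Measure E) [IsProbabilityMeasure μ]
    (x : E) (f : E → ℝ) (hf : Integrable f μ) :
    Tendsto
      (fun σ : ℝ =>
        (∫ z, Real.exp (-‖z - x‖ ^ 2 / σ ^ 2) * f z ∂μ) /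
          (∫ z, Real.exp (-‖z - x‖ ^ 2 / σ ^ 2) ∂μ))
      atTop (nhds (∫ z, f z ∂μ)) := by
  rw [← average_eq_integral]
  exact tendsto_weighted_average_of_tendsto_one hf
    (fun σ => (continuous_gaussianKernel x σ).aestronglyMeasurable)
    (abs_gaussianKernel_le_one x) (tendsto_gaussianKernel_atTop x)

/-- As the bandwidth `σ → ∞`, the Gaussian-kernel-weighted expectation
`(∫ exp (−‖z − x‖²/σ²) f z ∂μ) / (∫ exp (−‖z − x‖²/σ²) ∂μ)` of a μ-integrable function
`f` under a probability measure `μ` converges to the global expectation `∫ f ∂μ`. -/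
theorem kernel_weighted_expectation_tendsto_global
    {E : Type*} [NormedAddCommGroup E] [InnerProductSpace ℝ E]
    [MeasurableSpace E] [BorelSpace E]
    (μ : Measure E) [IsProbabilityMeasure μ]
    (x : E) (f : E → ℝ) (hf : Integrable f μ) :
    Tendsto
      (fun σ : ℝ =>
        (∫ z, Real.exp (-‖z - x‖ ^ 2 / σ ^ 2) * f z ∂μ) /
          (∫ z, Real.exp (-‖z - x‖ ^ 2 / σ ^ 2) ∂μ))
      atTop (nhds (∫ z, f z ∂μ)) :=
  kernel_weighted_expectation_tendsto_global_general μ x f hf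
end

section
/- Let E be a real inner product space, x ∈ E, ι a finite index set, x_i ∈ E and a_i ∈ ℝ for i ∈ ι, and suppose there is an index j ∈ ι that is the strictly unique nearest point to x: ‖x − x_j‖ < ‖x − x_i‖ for all i ≠ j. Then as σ → 0⁺, the Nadaraya–Watson estimator (∑_i exp(−‖x − x_i‖²/σ²) a_i) / (∑_i exp(−‖x − x_i‖²/σ²)) converges to a_j. -/
open Filter Topology Finset

/-!
Dividing numerator and denominator by the weight of the nearest point `xi j`, the estimator
becomes an average with weights `exp ((‖x - xi j‖² - ‖x - xi i‖²) / σ²)`, which is `1` for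
`i = j` and tends to `0` for every other `i`, so the average tends to `a j`.
-/

theorem tendsto_sum_mul_div_sum_of_dominant {α ι : Type*} [Fintype ι] [DecidableEq ι]
    {l : Filter α} (w : ι → α → ℝ) (a : ι → ℝ) (j : ι) (hj : ∀ᶠ t in l, w j t ≠ 0)
    (hdom : ∀ i ≠ j, Tendsto (fun t => w i t / w j t) l (𝓝 0)) :
    Tendsto (fun t => (∑ i, w i t * a i) / ∑ i, w i t) l (𝓝 (a j)) := by
  have hratio : ∀ i, Tendsto (fun t => w i t / w j t) l (𝓝 (if i = j then 1 else 0)) := by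
    intro i
    by_cases hij : i = j
    · subst hij
      rw [if_pos rfl]
      exact tendsto_const_nhds.congr' (hj.mono fun t ht => (div_self ht).symm)
    · simpa [hij] using hdom i hij
  have hnum : Tendsto (fun t => ∑ i, w i t / w j t * a i) l (𝓝 (a j)) := by
    simpa [ite_mul] using tendsto_finsetSum univ fun i _ => (hratio i).mul_const (a i)
  have hden : Tendsto (fun t => ∑ i, w i t / w j t) l (𝓝 1) := by
    simpa using tendsto_finsetSum univ fun i _ => hratio i
  have hlim : Tendsto (fun t => (∑ i, w i t / w j t * a i) / ∑ i, w i t / w j t) l (𝓝 (a j)) :=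
    by simpa [Pi.div_def] using hnum.div hden one_ne_zero
  refine hlim.congr' ?_
  filter_upwards [hj] with t ht
  simp only [div_mul_eq_mul_div, ← Finset.sum_div]
  exact div_div_div_cancel_right₀ ht _ _

theorem tendsto_exp_div_sq_nhdsGT_zero {c : ℝ} (hc : c < 0) :
    Tendsto (fun σ : ℝ => Real.exp (c / σ ^ 2)) (𝓝[>] 0) (𝓝 0) := by
  have hsq : Tendsto (fun σ : ℝ => σ ^ 2) (𝓝[>] 0) (𝓝[>] 0) :=
    tendsto_nhdsWithin_of_tendsto_nhds_of_eventually_within _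
      ((continuous_pow 2).tendsto' 0 0 (zero_pow two_ne_zero) |>.mono_left nhdsWithin_le_nhds)
      (eventually_nhdsWithin_of_forall fun σ (hσ : 0 < σ) => pow_pos hσ 2)
  exact Real.tendsto_exp_atBot.comp <|
    (tendsto_inv_nhdsGT_zero.comp hsq).const_mul_atTop_of_neg hc

theorem nadaraya_watson_tendsto_nearest_zero_general
    {E : Type*} [NormedAddCommGroup E]
    {ι : Type*} [Fintype ι]
    (x : E) (xi : ι → E) (a : ι → ℝ) (j : ι)
    (hj : ∀ i : ι, i ≠ j → ‖x - xi j‖ < ‖x - xi i‖) :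
    Tendsto
      (fun σ : ℝ =>
        (∑ i, Real.exp (-‖x - xi i‖ ^ 2 / σ ^ 2) * a i) /
          (∑ i, Real.exp (-‖x - xi i‖ ^ 2 / σ ^ 2)))
      (nhdsWithin 0 (Set.Ioi 0)) (nhds (a j)) := by
  classical
  refine tendsto_sum_mul_div_sum_of_dominant _ a j
    (Eventually.of_forall fun σ => (Real.exp_pos _).ne') fun i hi => ?_
  have hgap : ‖x - xi j‖ ^ 2 - ‖x - xi i‖ ^ 2 < 0 :=
    sub_neg.2 <| pow_lt_pow_left₀ (hj i hi) (norm_nonneg _) two_ne_zero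
  refine (tendsto_exp_div_sq_nhdsGT_zero hgap).congr fun σ => ?_
  rw [← Real.exp_sub]
  ring_nf

/-- As `σ → 0⁺`, the Nadaraya–Watson estimator with Gaussian weights concentrates on the
strictly unique nearest reference point `xi j` and converges to `a j`. -/
theorem nadaraya_watson_tendsto_nearest_zero
    {E : Type*} [NormedAddCommGroup E] [InnerProductSpace ℝ E]
    {ι : Type*} [Fintype ι]
    (x : E) (xi : ι → E) (a : ι → ℝ) (j : ι)
    (hj : ∀ i : ι, i ≠ j → ‖x - xi j‖ < ‖x - xi i‖) :
    Tendsto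
      (fun σ : ℝ =>
        (∑ i, Real.exp (-‖x - xi i‖ ^ 2 / σ ^ 2) * a i) /
          (∑ i, Real.exp (-‖x - xi i‖ ^ 2 / σ ^ 2)))
      (nhdsWithin 0 (Set.Ioi 0)) (nhds (a j)) :=
  nadaraya_watson_tendsto_nearest_zero_general x xi a j hj
end

section
/- Let μ be a finite measure on a real inner product space E (with Borel σ-algebra), let x ∈ E with μ(B(x, ε)) > 0 for every ε > 0, and let f : E → ℝ be a bounded measurable function that is continuous at x. Then as σ → 0⁺, the kernel-weighted expectation (∫ exp(−‖z − x‖²/σ²) f(z) dμ(z)) / (∫ exp(−‖z − x‖²/σ²) dμ(z)) converges to f(x). -/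
/-!
Normalised by its total mass, the Gaussian weight `exp (-‖z - x‖² / σ²)` is a family of peak
functions at `x`: its mass is at least `exp (-r² / σ²) μ(B(x, r))`, while off `B(x, 2r)` it is at
most `exp (-4r² / σ²)`, so the normalised weight tends to `0` uniformly away from `x`. Integrating
a bounded function continuous at `x` against peak functions recovers its value at `x`.
-/

open MeasureTheory Filter Topology Set Metric

section PeakFunction

variable {ι α : Type*} [TopologicalSpace α] [MeasurableSpace α] [BorelSpace α] {μ : Measure α}
  [IsFiniteMeasure μ] {l : Filter ι}

theorem tendsto_integral_mul_div_integral_of_tendstoUniformlyOn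
    {w : ι → α → ℝ} {g : α → ℝ} {x₀ : α}
    (hw_nonneg : ∀ i z, 0 ≤ w i z) (hw_meas : ∀ i, AEStronglyMeasurable (w i) μ)
    (hw_pos : ∀ᶠ i in l, 0 < ∫ z, w i z ∂μ)
    (hw_peak : ∀ u, IsOpen u → x₀ ∈ u →
      TendstoUniformlyOn (fun i z ↦ w i z / ∫ y, w i y ∂μ) 0 l uᶜ)
    (hg : Integrable g μ) (hg_cont : ContinuousAt g x₀) :
    Tendsto (fun i ↦ (∫ z, w i z * g z ∂μ) / ∫ z, w i z ∂μ) l (𝓝 (g x₀)) := by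
  have h_mass : Tendsto (fun i ↦ ∫ z in univ, w i z / ∫ y, w i y ∂μ ∂μ) l (𝓝 1) := by
    refine tendsto_const_nhds.congr' ?_
    filter_upwards [hw_pos] with i hi
    rw [setIntegral_univ, integral_div, div_self hi.ne']
  have := tendsto_integral_peak_smul_of_integrable_of_tendsto MeasurableSet.univ univ_mem
    (measure_ne_top μ univ) (Eventually.of_forall fun i z ↦ div_nonneg (hw_nonneg i z)
      (integral_nonneg (hw_nonneg i))) hw_peak h_mass
    (Eventually.of_forall fun i ↦ (hw_meas i).mul_const _) hg hg_cont
  refine this.congr fun i ↦ ?_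
  simp_rw [smul_eq_mul, div_mul_eq_mul_div, integral_div]

end PeakFunction

section GaussianWeight

variable {E : Type*} [NormedAddCommGroup E]

noncomputable def gaussianWeight (x : E) (σ : ℝ) (z : E) : ℝ :=
  Real.exp (-‖z - x‖ ^ 2 / σ ^ 2)

theorem gaussianWeight_pos (x : E) (σ : ℝ) (z : E) : 0 < gaussianWeight x σ z :=
  Real.exp_pos _

theorem gaussianWeight_le_one (x : E) (σ : ℝ) (z : E) : gaussianWeight x σ z ≤ 1 :=
  Real.exp_le_one_iff.2 <| div_nonpos_of_nonpos_of_nonneg (by simp) (sq_nonneg σ)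

@[fun_prop]
theorem continuous_gaussianWeight (x : E) (σ : ℝ) : Continuous (gaussianWeight x σ) := by
  unfold gaussianWeight
  fun_prop

theorem gaussianWeight_le_of_le_norm_sub {x : E} {σ r : ℝ} {z : E} (hr : 0 ≤ r) (hz : r ≤ ‖z - x‖) :
    gaussianWeight x σ z ≤ Real.exp (-r ^ 2 / σ ^ 2) := by
  unfold gaussianWeight
  gcongr

theorem exp_neg_div_sq_le_gaussianWeight {x : E} {σ r : ℝ} {z : E} (hz : z ∈ ball x r) :
    Real.exp (-r ^ 2 / σ ^ 2) ≤ gaussianWeight x σ z := by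
  rw [mem_ball, dist_eq_norm] at hz
  unfold gaussianWeight
  gcongr

theorem tendsto_exp_neg_div_sq_nhdsGT_zero {c : ℝ} (hc : 0 < c) :
    Tendsto (fun σ : ℝ ↦ Real.exp (-c / σ ^ 2)) (𝓝[>] 0) (𝓝 0) := by
  have h := ((tendsto_pow_atTop two_ne_zero).comp tendsto_inv_nhdsGT_zero).const_mul_atTop hc
  refine (Real.tendsto_exp_neg_atTop_nhds_zero.comp h).congr fun σ ↦ ?_
  simp [div_eq_mul_inv]

variable [MeasurableSpace E] [BorelSpace E] (μ : Measure E) [IsFiniteMeasure μ]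

theorem integrable_gaussianWeight (x : E) (σ : ℝ) : Integrable (gaussianWeight x σ) μ :=
  .of_bound (continuous_gaussianWeight x σ).aestronglyMeasurable 1 <| .of_forall fun z ↦ by
    rw [Real.norm_of_nonneg (gaussianWeight_pos x σ z).le]
    exact gaussianWeight_le_one x σ z

theorem exp_neg_div_sq_mul_measureReal_ball_le_integral (x : E) (σ r : ℝ) :
    Real.exp (-r ^ 2 / σ ^ 2) * μ.real (ball x r) ≤ ∫ z, gaussianWeight x σ z ∂μ :=
  calc Real.exp (-r ^ 2 / σ ^ 2) * μ.real (ball x r)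
      = ∫ z, (ball x r).indicator (fun _ ↦ Real.exp (-r ^ 2 / σ ^ 2)) z ∂μ := by
        rw [integral_indicator_const _ measurableSet_ball, smul_eq_mul, mul_comm]
    _ ≤ ∫ z, gaussianWeight x σ z ∂μ := by
        refine integral_mono ((integrable_const _).indicator measurableSet_ball)
          (integrable_gaussianWeight μ x σ) fun z ↦ ?_
        by_cases hz : z ∈ ball x r
        · simpa [indicator_of_mem hz] using exp_neg_div_sq_le_gaussianWeight hz
        · simpa [indicator_of_notMem hz] using (gaussianWeight_pos x σ z).le

variable {μ}

theorem integral_gaussianWeight_pos {x : E} {r : ℝ} (hr : 0 < μ (ball x r)) (σ : ℝ) :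
    0 < ∫ z, gaussianWeight x σ z ∂μ :=
  lt_of_lt_of_le (mul_pos (Real.exp_pos _) (ENNReal.toReal_pos hr.ne' (measure_ne_top μ _)))
    (exp_neg_div_sq_mul_measureReal_ball_le_integral μ x σ r)

theorem gaussianWeight_div_integral_le {x : E} {r : ℝ} (hr : 0 ≤ r) (hμr : 0 < μ (ball x r))
    {σ : ℝ} {z : E} (hz : 2 * r ≤ ‖z - x‖) :
    gaussianWeight x σ z / ∫ y, gaussianWeight x σ y ∂μ ≤
      Real.exp (-r ^ 2 / σ ^ 2) / μ.real (ball x r) := by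
  have hm : 0 < μ.real (ball x r) := ENNReal.toReal_pos hμr.ne' (measure_ne_top μ _)
  have h_tail : gaussianWeight x σ z ≤ Real.exp (-r ^ 2 / σ ^ 2) * Real.exp (-r ^ 2 / σ ^ 2) := by
    refine (gaussianWeight_le_of_le_norm_sub (by positivity) hz).trans ?_
    rw [← Real.exp_add, ← add_div]
    gcongr
    nlinarith
  rw [div_le_div_iff₀ (integral_gaussianWeight_pos hμr σ) hm]
  calc gaussianWeight x σ z * μ.real (ball x r)
      ≤ Real.exp (-r ^ 2 / σ ^ 2) * (Real.exp (-r ^ 2 / σ ^ 2) * μ.real (ball x r)) := by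
        rw [← mul_assoc]; gcongr
    _ ≤ Real.exp (-r ^ 2 / σ ^ 2) * ∫ y, gaussianWeight x σ y ∂μ := by
        gcongr; exact exp_neg_div_sq_mul_measureReal_ball_le_integral μ x σ r

theorem tendstoUniformlyOn_gaussianWeight_div_integral {x : E}
    (hx : ∀ ε : ℝ, 0 < ε → 0 < μ (ball x ε)) {u : Set E} (hu : IsOpen u) (hxu : x ∈ u) :
    TendstoUniformlyOn (fun σ z ↦ gaussianWeight x σ z / ∫ y, gaussianWeight x σ y ∂μ) 0
      (𝓝[>] 0) uᶜ := by
  obtain ⟨δ, hδ, hδu⟩ := isOpen_iff.1 hu x hxu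
  have hμr := hx (δ / 2) (by positivity)
  have h_bound := (tendsto_exp_neg_div_sq_nhdsGT_zero (c := (δ / 2) ^ 2) (by positivity)).div_const
    (μ.real (ball x (δ / 2)))
  rw [zero_div] at h_bound
  refine tendstoUniformlyOn_iff.2 fun ε hε ↦ ?_
  filter_upwards [h_bound.eventually_lt_const hε] with σ hσ z hz
  have hz' : 2 * (δ / 2) ≤ ‖z - x‖ := by
    rw [mul_div_cancel₀ δ two_ne_zero, ← dist_eq_norm]
    exact not_lt.1 fun h ↦ hz (hδu h)
  rw [Pi.zero_apply, dist_zero_left, Real.norm_of_nonneg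
    (div_nonneg (gaussianWeight_pos x σ z).le (integral_gaussianWeight_pos hμr σ).le)]
  exact (gaussianWeight_div_integral_le (by positivity) hμr hz').trans_lt hσ

end GaussianWeight

theorem kernel_weighted_expectation_tendsto_point_general
    {E : Type*} [NormedAddCommGroup E]
    [MeasurableSpace E] [BorelSpace E]
    (μ : Measure E) [IsFiniteMeasure μ]
    (x : E) (hx : ∀ ε : ℝ, 0 < ε → 0 < μ (Metric.ball x ε))
    (f : E → ℝ) (hf_meas : Measurable f)
    (hf_bdd : ∃ C : ℝ, ∀ z, |f z| ≤ C)
    (hf_cont : ContinuousAt f x) :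
    Tendsto
      (fun σ : ℝ =>
        (∫ z, Real.exp (-‖z - x‖ ^ 2 / σ ^ 2) * f z ∂μ) /
          (∫ z, Real.exp (-‖z - x‖ ^ 2 / σ ^ 2) ∂μ))
      (nhdsWithin 0 (Set.Ioi 0)) (nhds (f x)) := by
  obtain ⟨C, hC⟩ := hf_bdd
  have hf_int : Integrable f μ :=
    .of_bound hf_meas.aestronglyMeasurable C
      (.of_forall fun z ↦ (Real.norm_eq_abs _).trans_le (hC z))
  exact tendsto_integral_mul_div_integral_of_tendstoUniformlyOn (w := gaussianWeight x)
    (fun σ z ↦ (gaussianWeight_pos x σ z).le)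
    (fun σ ↦ (continuous_gaussianWeight x σ).aestronglyMeasurable)
    (.of_forall (integral_gaussianWeight_pos (hx 1 one_pos)))
    (fun _ hu hxu ↦ tendstoUniformlyOn_gaussianWeight_div_integral hx hu hxu) hf_int hf_cont

/-- Population small-bandwidth limit: for a finite measure `μ` charging every ball around
`x`, and a bounded measurable `f` continuous at `x`, the Gaussian-kernel-weighted
expectation converges to `f x` as `σ → 0⁺`. -/
theorem kernel_weighted_expectation_tendsto_point
    {E : Type*} [NormedAddCommGroup E] [InnerProductSpace ℝ E]
    [MeasurableSpace E] [BorelSpace E]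
    (μ : Measure E) [IsFiniteMeasure μ]
    (x : E) (hx : ∀ ε : ℝ, 0 < ε → 0 < μ (Metric.ball x ε))
    (f : E → ℝ) (hf_meas : Measurable f)
    (hf_bdd : ∃ C : ℝ, ∀ z, |f z| ≤ C)
    (hf_cont : ContinuousAt f x) :
    Tendsto
      (fun σ : ℝ =>
        (∫ z, Real.exp (-‖z - x‖ ^ 2 / σ ^ 2) * f z ∂μ) /
          (∫ z, Real.exp (-‖z - x‖ ^ 2 / σ ^ 2) ∂μ))
      (nhdsWithin 0 (Set.Ioi 0)) (nhds (f x)) :=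
  kernel_weighted_expectation_tendsto_point_general μ x hx f hf_meas hf_bdd hf_cont
end
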